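/- In the extragradient setting with γ ∈ (0, 1/L) and z⋆ ∈ zer(F + ∂g), the Lyapunov values Vₖ satisfy Vₖ ≤ ‖z⁰ - z⋆‖² / (α(γ, L)(k + 1)) for all k ∈ ℕ, where α(γ, L) = (γ²/2)(√(5 - 4γ²L²) - 1) > 0. -/

import Mathlib

open scoped RealInnerProductSpace

/-- `g` is proper: finite somewhere and never `⊥`. -/
def IsProperEF {H : Type*} (g : H → EReal) : Prop :=
  (∃ x, g x ≠ ⊤) ∧ ∀ x, g x ≠ ⊥

/-- `g` is convex (extended-real-valued). -/
def IsConvexEF {H : Type*} [NormedAddCommGroup H] [InnerProductSpace ℝ H]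
    (g : H → EReal) : Prop :=
  ∀ x y : H, ∀ a b : ℝ, 0 ≤ a → 0 ≤ b → a + b = 1 →
    g (a • x + b • y) ≤ (a : EReal) * g x + (b : EReal) * g y

/-- `ξ` is a subgradient of `g` at `z`, i.e. `ξ ∈ ∂g(z)`. -/
def InSubdiff {H : Type*} [NormedAddCommGroup H] [InnerProductSpace ℝ H]
    (g : H → EReal) (z ξ : H) : Prop :=
  ∀ y : H, g z + ((⟪ξ, y - z⟫ : ℝ) : EReal) ≤ g y

/-- `p = prox_{γ g}(x)`, i.e. `p` minimizes `g(·) + (1/(2γ))‖x - ·‖²`. -/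
def IsProx {H : Type*} [NormedAddCommGroup H] [InnerProductSpace ℝ H]
    (g : H → EReal) (γ : ℝ) (x p : H) : Prop :=
  ∀ y : H, g p + ((1 / (2 * γ) * ‖x - p‖ ^ 2 : ℝ) : EReal) ≤
    g y + ((1 / (2 * γ) * ‖x - y‖ ^ 2 : ℝ) : EReal)

/-- The Lyapunov function `V`. -/
noncomputable def lyapV {H : Type*} [NormedAddCommGroup H] [InnerProductSpace ℝ H]
    (F : H → H) (γ : ℝ) (z zb zp : H) : ℝ :=
  (2 / γ) * ⟪z - zp, F z - F zb⟫ + (1 / γ ^ 2) * ‖zp - zb‖ ^ 2 + (1 / γ ^ 2) * ‖z - zp‖ ^ 2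

/-!
The prox steps give subgradients `uₖ ∈ ∂g(z̄ᵏ)` and `vₖ ∈ ∂g(zᵏ⁺¹)`, and rewrite `Vₖ` as
`2⟪F z̄ᵏ + vₖ, F zᵏ - F z̄ᵏ⟫ + ‖F zᵏ + uₖ - F z̄ᵏ - vₖ‖² + ‖F z̄ᵏ + vₖ‖²`. Monotonicity of `F`,
(cyclic) monotonicity of `∂g` and the Lipschitz bound then give two inequalities:
`γ²β Vₖ ≤ ‖zᵏ - z⋆‖² - ‖zᵏ⁺¹ - z⋆‖²`, where `β = (√(5 - 4γ²L²) - 1)/2` is the positive root of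
`β² + β = 1 - γ²L²` (this is what makes the remainder a perfect square), and `Vₖ₊₁ ≤ Vₖ`.
Summing the first over `0, …, k` and using the second yields `(k + 1) γ²β Vₖ ≤ ‖z⁰ - z⋆‖²`, and
`α(γ, L) = γ²β`.
-/

namespace EReal

lemma ne_top_of_add_coe_le {x y : EReal} {c : ℝ} (h : x + c ≤ y) (hy : y ≠ ⊤) : x ≠ ⊤ := by
  rintro rfl
  simp_all

lemma toReal_add_le_of_add_coe_le {x y : EReal} {c d : ℝ} (h : x + c ≤ y + d)
    (hx : x ≠ ⊥) (hy : y ≠ ⊤) : x.toReal + c ≤ y.toReal + d := by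
  induction x <;> induction y <;> simp_all [← EReal.coe_add]

end EReal

lemma Antitone.succ_mul_le_of_le_sub {V d : ℕ → ℝ} (hV : Antitone V) (hd : ∀ k, 0 ≤ d k)
    (h : ∀ k, V k ≤ d k - d (k + 1)) (k : ℕ) : (k + 1) * V k ≤ d 0 := by
  suffices ∀ k : ℕ, (k + 1) * V k ≤ d 0 - d (k + 1) from (this k).trans (by linarith [hd (k + 1)])
  intro k
  induction k with
  | zero => simpa using h 0
  | succ k ih =>
    have := mul_le_mul_of_nonneg_left (hV k.le_succ) (k.cast_add_one_pos (α := ℝ)).le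
    push_cast
    linarith [h (k + 1)]

open Filter Topology in
lemma le_of_forall_le_add_mul {a b c : ℝ} (h : ∀ θ : ℝ, 0 < θ → θ ≤ 1 → a ≤ b + θ * c) :
    a ≤ b := by
  have hlim : Tendsto (fun θ : ℝ ↦ b + θ * c) (𝓝[>] 0) (𝓝 b) := by
    simpa using ((continuous_id.mul continuous_const).const_add b).tendsto' 0 (b + 0 * c)
      (by simp) |>.mono_left nhdsWithin_le_nhds
  refine ge_of_tendsto hlim ?_
  filter_upwards [Ioo_mem_nhdsGT one_pos] with θ hθ using h θ hθ.1 hθ.2.le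

section Prox

variable {H : Type*} [NormedAddCommGroup H] [InnerProductSpace ℝ H] {g : H → EReal} {γ : ℝ}
  {x p y : H}

lemma IsProx.ne_top (h : IsProx g γ x p) (hy : g y ≠ ⊤) : g p ≠ ⊤ :=
  EReal.ne_top_of_add_coe_le (h y) (EReal.add_ne_top hy (EReal.coe_ne_top _))

lemma IsProx.toReal_add_inner_le (hconv : IsConvexEF g) (hbot : ∀ x, g x ≠ ⊥) (hγ : 0 < γ)
    (h : IsProx g γ x p) (hy : g y ≠ ⊤) {θ : ℝ} (hθ0 : 0 < θ) (hθ1 : θ ≤ 1) :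
    (g p).toReal + γ⁻¹ * ⟪x - p, y - p⟫ ≤ (g y).toReal + θ * (‖y - p‖ ^ 2 / (2 * γ)) := by
  set a := (g p).toReal
  set b := (g y).toReal
  set w := p + θ • (y - p)
  have hw : g w ≤ ((1 - θ) * a + θ * b : ℝ) := by
    have := hconv p y (1 - θ) θ (by linarith) hθ0.le (by ring)
    rwa [show (1 - θ) • p + θ • y = w by simp only [w, sub_smul, smul_sub, one_smul]; abel,
      ← EReal.coe_toReal (h.ne_top hy) (hbot p), ← EReal.coe_toReal hy (hbot y),
      ← EReal.coe_mul, ← EReal.coe_mul, ← EReal.coe_add] at this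
  have hw_top : g w ≠ ⊤ := ne_top_of_le_ne_top (EReal.coe_ne_top _) hw
  have hconv_w : (g w).toReal ≤ (1 - θ) * a + θ * b :=
    EReal.toReal_le_toReal hw (hbot w) (EReal.coe_ne_top _)
  have hprox_w := EReal.toReal_add_le_of_add_coe_le (h w) (hbot p) hw_top
  have hdist : ‖x - w‖ ^ 2 = ‖x - p‖ ^ 2 - 2 * θ * ⟪x - p, y - p⟫ + θ ^ 2 * ‖y - p‖ ^ 2 := by
    rw [show x - w = (x - p) - θ • (y - p) by simp only [w]; abel, norm_sub_sq_real,
      inner_smul_right, norm_smul, mul_pow, Real.norm_eq_abs, sq_abs]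
    ring
  rw [hdist] at hprox_w
  have key : θ * (a + γ⁻¹ * ⟪x - p, y - p⟫) ≤ θ * (b + θ * (‖y - p‖ ^ 2 / (2 * γ))) := by
    have e : 1 / (2 * γ) * (‖x - p‖ ^ 2 - 2 * θ * ⟪x - p, y - p⟫ + θ ^ 2 * ‖y - p‖ ^ 2) =
        1 / (2 * γ) * ‖x - p‖ ^ 2 - θ * (γ⁻¹ * ⟪x - p, y - p⟫) +
          θ * (θ * (‖y - p‖ ^ 2 / (2 * γ))) := by
      field_simp
    linarith
  exact le_of_mul_le_mul_left key hθ0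

end Prox

section Subdiff

variable {H : Type*} [NormedAddCommGroup H] [InnerProductSpace ℝ H] {g : H → EReal} {γ : ℝ}
  {x p q : H}

lemma IsProx.inSubdiff (hproper : IsProperEF g) (hconv : IsConvexEF g) (hγ : 0 < γ)
    (h : IsProx g γ x p) : InSubdiff g p (γ⁻¹ • (x - p)) := by
  obtain ⟨⟨y₀, hy₀⟩, hbot⟩ := hproper
  intro y
  by_cases hy : g y = ⊤
  · simp [hy]
  rw [← EReal.coe_toReal (h.ne_top hy₀) (hbot p), ← EReal.coe_toReal hy (hbot y),
    ← EReal.coe_add, EReal.coe_le_coe_iff, real_inner_smul_left]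
  exact le_of_forall_le_add_mul fun θ hθ0 hθ1 ↦ h.toReal_add_inner_le hconv hbot hγ hy hθ0 hθ1

lemma InSubdiff.toReal_add_inner_le {ξ : H} (h : InSubdiff g p ξ) (hp : g p ≠ ⊥) (hq : g q ≠ ⊤) :
    (g p).toReal + ⟪ξ, q - p⟫ ≤ (g q).toReal := by
  simpa using EReal.toReal_add_le_of_add_coe_le (d := 0) (by simpa using h q) hp hq

lemma InSubdiff.inner_sub_sub_nonneg (hbot : ∀ x, g x ≠ ⊥) {ξ η : H} (hξ : InSubdiff g p ξ)
    (hη : InSubdiff g q η) (hp : g p ≠ ⊤) (hq : g q ≠ ⊤) : 0 ≤ ⟪ξ - η, p - q⟫ := by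
  have h₁ := hξ.toReal_add_inner_le (hbot p) hq
  have h₂ := hη.toReal_add_inner_le (hbot q) hp
  rw [← neg_sub p q, inner_neg_right] at h₁
  rw [inner_sub_left]
  linarith

lemma InSubdiff.inner_cycle_three_nonpos (hbot : ∀ x, g x ≠ ⊥) {p₁ p₂ p₃ ξ₁ ξ₂ ξ₃ : H}
    (h₁ : InSubdiff g p₁ ξ₁) (h₂ : InSubdiff g p₂ ξ₂) (h₃ : InSubdiff g p₃ ξ₃)
    (hp₁ : g p₁ ≠ ⊤) (hp₂ : g p₂ ≠ ⊤) (hp₃ : g p₃ ≠ ⊤) :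
    ⟪ξ₁, p₂ - p₁⟫ + ⟪ξ₂, p₃ - p₂⟫ + ⟪ξ₃, p₁ - p₃⟫ ≤ 0 := by
  linarith [h₁.toReal_add_inner_le (hbot p₁) hp₂, h₂.toReal_add_inner_le (hbot p₂) hp₃,
    h₃.toReal_add_inner_le (hbot p₃) hp₁]

end Subdiff

section Extragradient

variable {H : Type*} [NormedAddCommGroup H] [InnerProductSpace ℝ H] {F : H → H} {g : H → EReal}
  {γ L : ℝ} {x z zb zp : H}

lemma IsProx.exists_inSubdiff_eq (hproper : IsProperEF g) (hconv : IsConvexEF g) (hγ : 0 < γ)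
    {f p : H} (h : IsProx g γ (x - γ • f) p) : ∃ u, InSubdiff g p u ∧ p = x - γ • (f + u) :=
  ⟨_, h.inSubdiff hproper hconv hγ, by simp only [smul_add, smul_inv_smul₀ hγ.ne']; abel⟩

lemma lyapV_eq (hγ : γ ≠ 0) {u v : H} (hzb : zb = z - γ • (F z + u))
    (hzp : zp = z - γ • (F zb + v)) :
    lyapV F γ z zb zp =
      2 * ⟪F zb + v, F z - F zb⟫ + ‖F z + u - (F zb + v)‖ ^ 2 + ‖F zb + v‖ ^ 2 := by
  have h₁ : z - zp = γ • (F zb + v) := by rw [hzp]; abel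
  have h₂ : zp - zb = γ • (F z + u - (F zb + v)) := by rw [hzp, hzb, smul_sub]; abel
  rw [lyapV, h₁, h₂, real_inner_smul_left, norm_smul, norm_smul, Real.norm_eq_abs, mul_pow,
    mul_pow, sq_abs]
  field_simp

lemma sq_mul_lyapV_le_sub (hproper : IsProperEF g) (hconv : IsConvexEF g)
    (hmono : ∀ x y : H, 0 ≤ ⟪F x - F y, x - y⟫) (hlip : ∀ x y : H, ‖F x - F y‖ ≤ L * ‖x - y‖)
    (hγ : 0 < γ) {β : ℝ} (hβ0 : 0 ≤ β) (hβ : β ^ 2 + β = 1 - γ ^ 2 * L ^ 2)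
    {zs : H} (hzs : InSubdiff g zs (-F zs))
    (hzb : IsProx g γ (z - γ • F z) zb) (hzp : IsProx g γ (z - γ • F zb) zp) :
    γ ^ 2 * β * lyapV F γ z zb zp ≤ ‖z - zs‖ ^ 2 - ‖zp - zs‖ ^ 2 := by
  obtain ⟨u, hu, hzb_eq⟩ := hzb.exists_inSubdiff_eq hproper hconv hγ
  obtain ⟨v, hv, hzp_eq⟩ := hzp.exists_inSubdiff_eq hproper hconv hγ
  obtain ⟨⟨y₀, hy₀⟩, hbot⟩ := hproper
  have hcyc : γ * (⟪u, zp - zb⟫ + ⟪v, zs - zp⟫ + ⟪-F zs, zb - zs⟫) ≤ 0 :=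
    mul_nonpos_of_nonneg_of_nonpos hγ.le <| InSubdiff.inner_cycle_three_nonpos hbot hu hv hzs
      (hzb.ne_top hy₀) (hzp.ne_top hy₀) (EReal.ne_top_of_add_coe_le (hzs y₀) hy₀)
  have hpair : 0 ≤ 2 * β * (γ * ⟪u - v, zb - zp⟫) :=
    mul_nonneg (by positivity) <| mul_nonneg hγ.le <|
      hu.inner_sub_sub_nonneg hbot hv (hzb.ne_top hy₀) (hzp.ne_top hy₀)
  have hmono' : 0 ≤ γ * ⟪F zb - F zs, zb - zs⟫ := mul_nonneg hγ.le (hmono zb zs)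
  have hlip' : γ ^ 2 * ‖F z - F zb‖ ^ 2 ≤ γ ^ 2 * (L ^ 2 * ‖z - zb‖ ^ 2) := by
    have := pow_le_pow_left₀ (norm_nonneg _) (hlip z zb) 2
    rw [mul_pow] at this
    exact mul_le_mul_of_nonneg_left this (sq_nonneg γ)
  -- After expansion the claim is the sum of these five inequalities; `β² + β = 1 - γ²L²` is
  -- what lets the square `hsq` absorb the Lipschitz slack.
  have hsq : 0 ≤ ‖β • (z - zb) + γ • (u - v)‖ ^ 2 := by positivity
  rw [norm_add_sq_real, norm_smul, mul_pow, Real.norm_eq_abs, sq_abs,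
    show β ^ 2 = 1 - γ ^ 2 * L ^ 2 - β by linarith] at hsq
  rw [lyapV_eq hγ.ne' hzb_eq hzp_eq]
  subst hzb_eq hzp_eq
  simp only [← real_inner_self_eq_norm_sq, inner_add_left, inner_add_right, inner_sub_left,
    inner_sub_right, inner_smul_left, inner_smul_right, inner_neg_left, starRingEnd_apply,
    star_trivial, real_inner_comm] at hcyc hpair hmono' hlip' hsq ⊢
  linarith

lemma lyapV_succ_le (hproper : IsProperEF g) (hconv : IsConvexEF g)
    (hmono : ∀ x y : H, 0 ≤ ⟪F x - F y, x - y⟫) (hlip : ∀ x y : H, ‖F x - F y‖ ≤ L * ‖x - y‖)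
    (hγ : 0 < γ) (hγL : γ ^ 2 * L ^ 2 ≤ 1) {zb' zpp : H}
    (hzb : IsProx g γ (z - γ • F z) zb) (hzp : IsProx g γ (z - γ • F zb) zp)
    (hzb' : IsProx g γ (zp - γ • F zp) zb') (hzpp : IsProx g γ (zp - γ • F zb') zpp) :
    lyapV F γ zp zb' zpp ≤ lyapV F γ z zb zp := by
  obtain ⟨u, -, hzb_eq⟩ := hzb.exists_inSubdiff_eq hproper hconv hγ
  obtain ⟨v, hv, hzp_eq⟩ := hzp.exists_inSubdiff_eq hproper hconv hγ
  obtain ⟨u', hu', hzb'_eq⟩ := hzb'.exists_inSubdiff_eq hproper hconv hγ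
  obtain ⟨v', hv', hzpp_eq⟩ := hzpp.exists_inSubdiff_eq hproper hconv hγ
  obtain ⟨⟨y₀, hy₀⟩, hbot⟩ := hproper
  have hcyc : γ * (⟪v, zb' - zp⟫ + ⟪u', zpp - zb'⟫ + ⟪v', zp - zpp⟫) ≤ 0 :=
    mul_nonpos_of_nonneg_of_nonpos hγ.le <| InSubdiff.inner_cycle_three_nonpos hbot hv hu' hv'
      (hzp.ne_top hy₀) (hzb'.ne_top hy₀) (hzpp.ne_top hy₀)
  have hmono' : 0 ≤ γ * ⟪F z - F zp, z - zp⟫ := mul_nonneg hγ.le (hmono z zp)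
  have hlip' : γ ^ 2 * ‖F zb - F zp‖ ^ 2 ≤ γ ^ 2 * (L ^ 2 * ‖zb - zp‖ ^ 2) := by
    have := pow_le_pow_left₀ (norm_nonneg _) (hlip zb zp) 2
    rw [mul_pow] at this
    exact mul_le_mul_of_nonneg_left this (sq_nonneg γ)
  have hslack : 0 ≤ (1 - γ ^ 2 * L ^ 2) * ‖zb - zp‖ ^ 2 :=
    mul_nonneg (by linarith) (by positivity)
  have hsq : 0 ≤ ‖γ • (v - u')‖ ^ 2 := by positivity
  rw [lyapV_eq hγ.ne' hzb'_eq hzpp_eq, lyapV_eq hγ.ne' hzb_eq hzp_eq]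
  refine le_of_mul_le_mul_left ?_ (pow_pos hγ 2)
  subst hzb_eq hzp_eq hzb'_eq hzpp_eq
  simp only [← real_inner_self_eq_norm_sq, inner_add_left, inner_add_right, inner_sub_left,
    inner_sub_right, inner_smul_left, inner_smul_right, starRingEnd_apply,
    star_trivial, real_inner_comm] at hcyc hmono' hlip' hslack hsq ⊢
  linarith

end Extragradient

lemma quadratic_root_sqrt_five_sub_four_mul {t : ℝ} (ht : t < 1) :
    0 < (√(5 - 4 * t) - 1) / 2 ∧
      ((√(5 - 4 * t) - 1) / 2) ^ 2 + (√(5 - 4 * t) - 1) / 2 = 1 - t := by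
  have h5 : 0 ≤ 5 - 4 * t := by linarith
  have h1 : 1 < √(5 - 4 * t) := Real.lt_sqrt zero_le_one |>.mpr (by linarith)
  exact ⟨by linarith, by nlinarith [Real.sq_sqrt h5]⟩

theorem stmt6_general {H : Type*} [NormedAddCommGroup H] [InnerProductSpace ℝ H]
    (F : H → H) (L γ : ℝ)
    (hmono : ∀ x y : H, 0 ≤ ⟪F x - F y, x - y⟫)
    (hlip : ∀ x y : H, ‖F x - F y‖ ≤ L * ‖x - y‖)
    (g : H → EReal) (hproper : IsProperEF g) (hconv : IsConvexEF g)
    (hγ0 : 0 < γ) (hγ1 : γ < 1 / L)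
    (zstar : H) (hzstar : InSubdiff g zstar (-F zstar))
    (z zb : ℕ → H)
    (hzb : ∀ k, IsProx g γ (z k - γ • F (z k)) (zb k))
    (hz : ∀ k, IsProx g γ (z k - γ • F (zb k)) (z (k + 1))) :
    0 < γ ^ 2 / 2 * (Real.sqrt (5 - 4 * γ ^ 2 * L ^ 2) - 1) ∧
      ∀ k : ℕ,
        lyapV F γ (z k) (zb k) (z (k + 1)) ≤
          ‖z 0 - zstar‖ ^ 2 /
            (γ ^ 2 / 2 * (Real.sqrt (5 - 4 * γ ^ 2 * L ^ 2) - 1) * (k + 1)) := by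
  have hγL : γ ^ 2 * L ^ 2 < 1 := by
    have hL : 0 < L := one_div_pos.mp (hγ0.trans hγ1)
    rw [← mul_pow]
    exact pow_lt_one₀ (by positivity) ((lt_div_iff₀ hL).mp hγ1) two_ne_zero
  obtain ⟨hβ0, hβ⟩ := quadratic_root_sqrt_five_sub_four_mul hγL
  set β := (√(5 - 4 * (γ ^ 2 * L ^ 2)) - 1) / 2
  have hα : γ ^ 2 / 2 * (√(5 - 4 * γ ^ 2 * L ^ 2) - 1) = γ ^ 2 * β := by
    rw [mul_assoc 4]; ring
  rw [hα]
  refine ⟨by positivity, fun k ↦ ?_⟩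
  have hdecr k : γ ^ 2 * β * lyapV F γ (z k) (zb k) (z (k + 1)) ≤
      ‖z k - zstar‖ ^ 2 - ‖z (k + 1) - zstar‖ ^ 2 :=
    sq_mul_lyapV_le_sub hproper hconv hmono hlip hγ0 hβ0.le hβ hzstar (hzb k) (hz k)
  have hanti : Antitone fun k ↦ γ ^ 2 * β * lyapV F γ (z k) (zb k) (z (k + 1)) :=
    antitone_nat_of_succ_le fun k ↦ mul_le_mul_of_nonneg_left
      (lyapV_succ_le hproper hconv hmono hlip hγ0 hγL.le (hzb k) (hz k) (hzb (k + 1)) (hz (k + 1)))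
      (by positivity)
  rw [le_div_iff₀ (by positivity)]
  linarith [hanti.succ_mul_le_of_le_sub (fun k ↦ sq_nonneg _) hdecr k]

theorem stmt6 {H : Type*} [NormedAddCommGroup H] [InnerProductSpace ℝ H] [CompleteSpace H]
    (F : H → H) (L γ : ℝ) (hL : 0 < L)
    (hmono : ∀ x y : H, 0 ≤ ⟪F x - F y, x - y⟫)
    (hlip : ∀ x y : H, ‖F x - F y‖ ≤ L * ‖x - y‖)
    (g : H → EReal) (hproper : IsProperEF g) (hconv : IsConvexEF g)
    (hlsc : LowerSemicontinuous g)
    (hγ0 : 0 < γ) (hγ1 : γ < 1 / L)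
    (zstar : H) (hzstar : InSubdiff g zstar (-F zstar))
    (z zb : ℕ → H)
    (hzb : ∀ k, IsProx g γ (z k - γ • F (z k)) (zb k))
    (hz : ∀ k, IsProx g γ (z k - γ • F (zb k)) (z (k + 1))) :
    0 < γ ^ 2 / 2 * (Real.sqrt (5 - 4 * γ ^ 2 * L ^ 2) - 1) ∧
      ∀ k : ℕ,
        lyapV F γ (z k) (zb k) (z (k + 1)) ≤
          ‖z 0 - zstar‖ ^ 2 /
            (γ ^ 2 / 2 * (Real.sqrt (5 - 4 * γ ^ 2 * L ^ 2) - 1) * (k + 1)) :=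
  stmt6_general F L γ hmono hlip g hproper hconv hγ0 hγ1 zstar hzstar z zb hzb hz
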